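/- arXiv:2603.00215 — 3 statements merged into one kernel-verified Lean document; each statement's English description precedes it below -/
import Mathlib

section
/- The number of unordered triples of collinear points in the grid {0,...,n-1}² is at most C·n⁴ log n for some absolute constant C and all n ≥ 2. -/
noncomputable def grid (n : ℕ) : Finset (ℤ × ℤ) :=
  (Finset.Icc 0 ((n : ℤ) - 1)) ×ˢ (Finset.Icc 0 ((n : ℤ) - 1))

def CollinearSet (s : Finset (ℤ × ℤ)) : Prop :=
  ∀ p ∈ s, ∀ q ∈ s, ∀ r ∈ s,
    (q.1 - p.1) * (r.2 - p.2) = (q.2 - p.2) * (r.1 - p.1)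

instance : DecidablePred CollinearSet := fun s => by unfold CollinearSet; infer_instance

noncomputable def collinearTriples (n : ℕ) : ℕ :=
  (((grid n).powersetCard 3).filter CollinearSet).card

/-!
Order a collinear triple lexicographically as `a < b < c`. Then `b` is a lattice point strictly
inside the segment `[a, c]`, so `b = a + k • (c - a) / g` with `0 < k < g`, where `g` is the gcd of
the coordinates of `c - a`. Hence there are at most `∑_{a, c} gcd (c - a) ≤ n² ∑_{v} gcd v`
triples, `v` ranging over the square `(-n, n]²`. Bounding `gcd v` by the sum of the `d ≤ n` that
divide both coordinates of `v` and counting multiples of `d`, the last sum is at most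
`∑_{d ≤ n} d (3n/d)² = 9 n² H_n = O(n² log n)`.
-/

open Finset

theorem IsCoprime.exists_eq_mul_of_mul_eq {R : Type*} [CommRing R] {u v x y : R}
    (huv : IsCoprime u v) (h : x * v = y * u) : ∃ k, x = k * u ∧ y = k * v := by
  obtain ⟨α, β, hαβ⟩ := huv
  exact ⟨α * x + β * y, by linear_combination (-x) * hαβ + β * h,
    by linear_combination (-y) * hαβ - α * h⟩

theorem Finset.exists_lt_lt_of_card_eq_three {α : Type*} [LinearOrder α] {s : Finset α}
    (h : #s = 3) : ∃ a b c, a < b ∧ b < c ∧ s = {a, b, c} := by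
  refine ⟨s.orderEmbOfFin h 0, s.orderEmbOfFin h 1, s.orderEmbOfFin h 2, by simp, by simp, ?_⟩
  conv_lhs => rw [← s.image_orderEmbOfFin_univ h]
  simp [Fin.univ_succ, image_insert]

theorem exists_lex_lt_lt_of_card_eq_three {s : Finset (ℤ × ℤ)} (h : #s = 3) :
    ∃ a b c, toLex a < toLex b ∧ toLex b < toLex c ∧ s = {a, b, c} := by
  obtain ⟨a, b, c, hab, hbc, hs⟩ :=
    exists_lt_lt_of_card_eq_three (s := s.image toLex)
      (by rwa [card_image_of_injective _ toLex.injective])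
  refine ⟨ofLex a, ofLex b, ofLex c, hab, hbc, ?_⟩
  simpa [image_image, Function.comp_def] using congrArg (image ofLex) hs

theorem pos_of_zsmul_pos {α : Type*} [AddCommGroup α] [LinearOrder α] [IsOrderedAddMonoid α]
    {a : α} {k : ℤ} (ha : 0 < a) (h : 0 < k • a) : 0 < k :=
  (zsmul_lt_zsmul_iff_left ha).mp (by rwa [zero_zsmul])

theorem pos_of_pos_of_zsmul_pos {α : Type*} [AddCommGroup α] [LinearOrder α]
    [IsOrderedAddMonoid α] {a : α} {k : ℤ} (hk : 0 < k) (h : 0 < k • a) : 0 < a :=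
  (zsmul_lt_zsmul_iff_right hk).mp (by rwa [zsmul_zero])

def latticeGcd (v : ℤ × ℤ) : ℕ := v.1.gcd v.2

theorem latticeGcd_ne_zero {v : ℤ × ℤ} (hv : v ≠ 0) : latticeGcd v ≠ 0 := by
  rw [latticeGcd, Ne, Int.gcd_eq_zero_iff]
  exact fun h => hv (Prod.ext h.1 h.2)

def primitiveDir (v : ℤ × ℤ) : ℤ × ℤ :=
  (v.1 / latticeGcd v, v.2 / latticeGcd v)

theorem gcd_smul_primitiveDir (v : ℤ × ℤ) : (latticeGcd v : ℤ) • primitiveDir v = v := by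
  ext
  · exact Int.mul_ediv_cancel' (Int.gcd_dvd_left _ _)
  · exact Int.mul_ediv_cancel' (Int.gcd_dvd_right _ _)

theorem isCoprime_primitiveDir {v : ℤ × ℤ} (hv : v ≠ 0) :
    IsCoprime (primitiveDir v).1 (primitiveDir v).2 :=
  Int.isCoprime_iff_gcd_eq_one.mpr
    (Int.gcd_div_gcd_div_gcd (Nat.pos_of_ne_zero (latticeGcd_ne_zero hv)))

theorem exists_eq_zsmul_primitiveDir {v w : ℤ × ℤ} (hv : v ≠ 0) (h : w.1 * v.2 = w.2 * v.1) :
    ∃ k : ℤ, w = k • primitiveDir v := by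
  have hg : (latticeGcd v : ℤ) ≠ 0 := Nat.cast_ne_zero.mpr (latticeGcd_ne_zero hv)
  have hw : w.1 * (primitiveDir v).2 = w.2 * (primitiveDir v).1 := by
    rw [← gcd_smul_primitiveDir v] at h
    apply mul_left_cancel₀ hg
    simp only [Prod.smul_fst, Prod.smul_snd, smul_eq_mul] at h
    linear_combination h
  obtain ⟨k, h1, h2⟩ := (isCoprime_primitiveDir hv).exists_eq_mul_of_mul_eq hw
  exact ⟨k, Prod.ext h1 h2⟩

theorem exists_eq_add_zsmul_primitiveDir {a b c : ℤ × ℤ} (hab : toLex a < toLex b)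
    (hbc : toLex b < toLex c) (hcol : (b.1 - a.1) * (c.2 - a.2) = (b.2 - a.2) * (c.1 - a.1)) :
    ∃ k ∈ Ioo (0 : ℤ) (latticeGcd (c - a)), b = a + k • primitiveDir (c - a) := by
  set g : ℤ := (latticeGcd (c - a) : ℤ)
  set p := primitiveDir (c - a)
  have hac : 0 < toLex (c - a) := sub_pos.mpr (hab.trans hbc)
  obtain ⟨k, hk⟩ := exists_eq_zsmul_primitiveDir (v := c - a) (w := b - a) hac.ne' hcol
  have hgp : g • toLex p = toLex (c - a) := gcd_smul_primitiveDir (c - a)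
  have hg : 0 < g := Int.natCast_pos.mpr (Nat.pos_of_ne_zero (latticeGcd_ne_zero hac.ne'))
  have hp : 0 < toLex p := pos_of_pos_of_zsmul_pos hg (hgp ▸ hac)
  have hk0 : 0 < k := pos_of_zsmul_pos hp (show 0 < toLex (k • p) from hk ▸ sub_pos.mpr hab)
  have hkg : 0 < g - k := by
    refine pos_of_zsmul_pos hp ?_
    rw [sub_zsmul, hgp]
    show 0 < toLex (c - a - k • p)
    rw [← hk, sub_sub_sub_cancel_right]
    exact sub_pos.mpr hbc
  exact ⟨k, mem_Ioo.mpr ⟨hk0, by omega⟩, by rw [← hk]; abel⟩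

theorem collinearTriples_le_sum_latticeGcd (n : ℕ) :
    collinearTriples n ≤ ∑ p ∈ grid n ×ˢ grid n, latticeGcd (p.2 - p.1) := by
  classical
  set S := (grid n ×ˢ grid n).sigma fun p => Ioo (0 : ℤ) (latticeGcd (p.2 - p.1))
  have hcover : ((grid n).powersetCard 3).filter CollinearSet ⊆
      S.image fun x => {x.1.1, x.1.1 + x.2 • primitiveDir (x.1.2 - x.1.1), x.1.2} := by
    intro s hs
    obtain ⟨⟨hsub, hcard⟩, hcol⟩ := mem_filter.mp hs |>.imp_left mem_powersetCard.mp
    obtain ⟨a, b, c, hab, hbc, rfl⟩ := exists_lex_lt_lt_of_card_eq_three hcard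
    obtain ⟨k, hk, rfl⟩ := exists_eq_add_zsmul_primitiveDir hab hbc
      (hcol a (by simp) _ (by simp) c (by simp))
    exact mem_image.mpr ⟨⟨(a, c), k⟩,
      mem_sigma.mpr ⟨mem_product.mpr ⟨hsub (by simp), hsub (by simp)⟩, hk⟩, rfl⟩
  calc collinearTriples n ≤ #S := (card_le_card hcover).trans card_image_le
    _ = ∑ p ∈ grid n ×ˢ grid n, #(Ioo (0 : ℤ) (latticeGcd (p.2 - p.1))) := card_sigma _ _
    _ ≤ _ := sum_le_sum fun p _ => by rw [Int.card_Ioo]; omega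

noncomputable def symmSquare (n : ℕ) : Finset (ℤ × ℤ) :=
  Ioc (-n : ℤ) n ×ˢ Ioc (-n : ℤ) n

theorem card_grid (n : ℕ) : #(grid n) = n ^ 2 := by
  rw [grid, card_product, Int.card_Icc, sq]
  congr 2 <;> omega

theorem sub_mem_symmSquare {n : ℕ} {a c : ℤ × ℤ} (ha : a ∈ grid n) (hc : c ∈ grid n) :
    c - a ∈ symmSquare n := by
  simp only [grid, symmSquare, mem_product, mem_Icc, mem_Ioc, Prod.fst_sub, Prod.snd_sub]
    at ha hc ⊢
  omega

theorem sum_grid_latticeGcd_sub_le (n : ℕ) :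
    ∑ p ∈ grid n ×ˢ grid n, latticeGcd (p.2 - p.1) ≤
      n ^ 2 * ∑ v ∈ symmSquare n, latticeGcd v := by
  rw [sum_product, ← card_grid, ← smul_eq_mul, ← sum_const]
  refine sum_le_sum fun a ha => ?_
  rw [← sum_image fun x _ y _ => sub_left_inj.mp]
  exact sum_le_sum_of_subset (image_subset_iff.mpr fun c hc => sub_mem_symmSquare ha hc)

theorem latticeGcd_le_sum_dvd {n : ℕ} {v : ℤ × ℤ} (hv : v ∈ symmSquare n) :
    latticeGcd v ≤ ∑ d ∈ Icc 1 n, if (d : ℤ) ∣ v.1 ∧ (d : ℤ) ∣ v.2 then d else 0 := by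
  rcases eq_or_ne v 0 with rfl | hv0
  · simp [latticeGcd]
  have hle : latticeGcd v ≤ n := by
    simp only [symmSquare, mem_product, mem_Ioc] at hv
    by_cases h1 : v.1 = 0
    · have := Int.gcd_le_natAbs_right v.1 fun h2 => hv0 (Prod.ext h1 h2)
      rw [latticeGcd]; omega
    · have := Int.gcd_le_natAbs_left v.2 h1
      rw [latticeGcd]; omega
  refine le_trans ?_ (single_le_sum (fun _ _ => Nat.zero_le _)
    (mem_Icc.mpr ⟨Nat.pos_of_ne_zero (latticeGcd_ne_zero hv0), hle⟩))
  simp [latticeGcd, Int.gcd_dvd_left, Int.gcd_dvd_right]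

theorem sum_symmSquare_ite_dvd (n d : ℕ) :
    ∑ v ∈ symmSquare n, (if (d : ℤ) ∣ v.1 ∧ (d : ℤ) ∣ v.2 then d else 0) =
      d * #{x ∈ Ioc (-n : ℤ) n | (d : ℤ) ∣ x} ^ 2 := by
  rw [← sum_filter, sum_const, symmSquare, filter_product, card_product, smul_eq_mul, sq, mul_comm]

theorem card_multiples_Ioc_le {n d : ℕ} (hd : 0 < d) :
    (#{x ∈ Ioc (-n : ℤ) n | (d : ℤ) ∣ x} : ℚ) ≤ 2 * n / d + 1 := by
  have floor_sub_floor_neg_le (x : ℚ) : (⌊x⌋ : ℚ) - ⌊-x⌋ ≤ 2 * x + 1 := by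
    linarith [Int.floor_le x, Int.lt_floor_add_one (-x)]
  rw [← Int.cast_natCast, Int.Ioc_filter_dvd_card _ _ (Int.natCast_pos.mpr hd), Int.cast_max]
  refine max_le ?_ (by positivity)
  simpa [neg_div, mul_div_assoc] using floor_sub_floor_neg_le (n / d)

theorem sum_latticeGcd_symmSquare_le_sum_card_multiples (n : ℕ) :
    ∑ v ∈ symmSquare n, latticeGcd v ≤
      ∑ d ∈ Icc 1 n, d * #{x ∈ Ioc (-n : ℤ) n | (d : ℤ) ∣ x} ^ 2 :=
  calc ∑ v ∈ symmSquare n, latticeGcd v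
      ≤ ∑ v ∈ symmSquare n, ∑ d ∈ Icc 1 n,
          if (d : ℤ) ∣ v.1 ∧ (d : ℤ) ∣ v.2 then d else 0 :=
        sum_le_sum fun _ hv => latticeGcd_le_sum_dvd hv
    _ = _ := by
        rw [sum_comm]
        exact sum_congr rfl fun d _ => sum_symmSquare_ite_dvd n d

theorem sum_latticeGcd_symmSquare_le (n : ℕ) :
    (∑ v ∈ symmSquare n, latticeGcd v : ℚ) ≤ 9 * n ^ 2 * harmonic n := by
  have hterm : ∀ d ∈ Icc 1 n,
      (d * #{x ∈ Ioc (-n : ℤ) n | (d : ℤ) ∣ x} ^ 2 : ℚ) ≤ 9 * n ^ 2 * (d : ℚ)⁻¹ := by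
    intro d hd
    obtain ⟨hd1, hdn⟩ := mem_Icc.mp hd
    have hd0 : (0 : ℚ) < d := by exact_mod_cast hd1
    have hdn' : (d : ℚ) ≤ n := by exact_mod_cast hdn
    have hcard : (#{x ∈ Ioc (-n : ℤ) n | (d : ℤ) ∣ x} : ℚ) ≤ 3 * n / d := by
      refine (card_multiples_Ioc_le hd1).trans ?_
      rw [div_add_one hd0.ne', div_le_div_iff_of_pos_right hd0]
      linarith
    calc (d * #{x ∈ Ioc (-n : ℤ) n | (d : ℤ) ∣ x} ^ 2 : ℚ) ≤ d * (3 * n / d) ^ 2 := by gcongr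
      _ = 9 * n ^ 2 * (d : ℚ)⁻¹ := by field_simp; ring
  calc (∑ v ∈ symmSquare n, latticeGcd v : ℚ)
      ≤ ∑ d ∈ Icc 1 n, (d * #{x ∈ Ioc (-n : ℤ) n | (d : ℤ) ∣ x} ^ 2 : ℚ) := by
        exact_mod_cast sum_latticeGcd_symmSquare_le_sum_card_multiples n
    _ ≤ ∑ d ∈ Icc 1 n, 9 * n ^ 2 * (d : ℚ)⁻¹ := sum_le_sum hterm
    _ = 9 * n ^ 2 * harmonic n := by rw [← mul_sum, harmonic_eq_sum_Icc]

theorem collinearTriples_le_harmonic (n : ℕ) :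
    (collinearTriples n : ℚ) ≤ 9 * n ^ 4 * harmonic n :=
  calc (collinearTriples n : ℚ) ≤ n ^ 2 * ∑ v ∈ symmSquare n, latticeGcd v := by
        exact_mod_cast (collinearTriples_le_sum_latticeGcd n).trans
          (sum_grid_latticeGcd_sub_le n)
    _ ≤ n ^ 2 * (9 * n ^ 2 * harmonic n) := by
        gcongr; exact_mod_cast sum_latticeGcd_symmSquare_le n
    _ = 9 * n ^ 4 * harmonic n := by ring

theorem collinearTriples_upper :
    ∃ C : ℝ, ∀ n : ℕ, 2 ≤ n →
      (collinearTriples n : ℝ) ≤ C * (n : ℝ) ^ 4 * Real.log n := by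
  refine ⟨9 * (1 + (Real.log 2)⁻¹), fun n hn => ?_⟩
  have hlog2 : 0 < Real.log 2 := Real.log_pos one_lt_two
  have hlog : 1 ≤ (Real.log 2)⁻¹ * Real.log n := by
    rw [inv_mul_eq_div, one_le_div hlog2]
    exact Real.log_le_log two_pos (by exact_mod_cast hn)
  calc (collinearTriples n : ℝ) ≤ 9 * n ^ 4 * harmonic n := by
        exact_mod_cast collinearTriples_le_harmonic n
    _ ≤ 9 * n ^ 4 * (1 + Real.log n) := by gcongr; exact harmonic_le_one_add_log n
    _ ≤ 9 * n ^ 4 * ((1 + (Real.log 2)⁻¹) * Real.log n) := by gcongr; linarith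
    _ = 9 * (1 + (Real.log 2)⁻¹) * n ^ 4 * Real.log n := by ring
end

section
/- The number of unordered triples of collinear points in the grid {0,...,n-1}² is at least c·n⁴ log n for some absolute constant c > 0 and all sufficiently large n. -/
open Filter

/-!
A base point `P ∈ [0, N)²`, a primitive direction `w = (a, b)` with `a, b ≥ 1` and integers
`1 ≤ k < d` with `d • w ∈ [0, N]²` give the collinear triple `{P, P + k • w, P + d • w}` in the
grid of side `n ≥ 2N`. The triple determines these parameters: `P` and `P + d • w` are its points
of least and greatest abscissa, and `d` is the gcd of the coordinates of `d • w` since `w` is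
primitive. At least a twelfth of the pairs in `[1, m]²` are coprime (at most `m²/d²` of them have
the common divisor `d`, and `∑_{d ≥ 2} 1/d² ≤ 11/12`), so for each `d` there are
`≳ d · (N/d)² · N² = N⁴/d` parameters, and summing over `d ≤ N` gives `≳ N⁴ log N`.
-/

open Finset

def coprimePairs (m : ℕ) : Finset (ℕ × ℕ) :=
  {ab ∈ Icc 1 m ×ˢ Icc 1 m | Nat.Coprime ab.1 ab.2}

lemma card_Icc_prod_filter_dvd (m d : ℕ) :
    #{ab ∈ Icc 1 m ×ˢ Icc 1 m | d ∣ ab.1 ∧ d ∣ ab.2} = (m / d) ^ 2 := by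
  rw [filter_product, card_product, ← sq, ← Nat.Ioc_filter_dvd_card_eq_div]
  rfl -- `Icc 1 m` and `Ioc 0 m` are the same finset of naturals by definition

lemma sum_Icc_two_inv_sq_le (m : ℕ) : ∑ d ∈ Icc 2 m, ((d : ℝ) ^ 2)⁻¹ ≤ 11 / 12 := by
  have hsplit : Icc 2 m ⊆ insert 2 (Ioo 2 (m + 1)) := by
    intro d; simp only [mem_Icc, mem_insert, mem_Ioo]; omega
  calc ∑ d ∈ Icc 2 m, ((d : ℝ) ^ 2)⁻¹
      ≤ ∑ d ∈ insert 2 (Ioo 2 (m + 1)), ((d : ℝ) ^ 2)⁻¹ :=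
        sum_le_sum_of_subset_of_nonneg hsplit fun _ _ _ => by positivity
    _ = 1 / 4 + ∑ d ∈ Ioo 2 (m + 1), ((d : ℝ) ^ 2)⁻¹ := by rw [sum_insert (by simp)]; norm_num
    _ ≤ 1 / 4 + 2 / (2 + 1) := by gcongr; exact_mod_cast sum_Ioo_inv_sq_le 2 (m + 1)
    _ = 11 / 12 := by norm_num

lemma card_coprimePairs_ge (m : ℕ) : (m : ℝ) ^ 2 / 12 ≤ #(coprimePairs m) := by
  set T := Icc 1 m ×ˢ Icc 1 m
  have hcover : {ab ∈ T | ¬ Nat.Coprime ab.1 ab.2} ⊆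
      (Icc 2 m).biUnion fun d => {ab ∈ T | d ∣ ab.1 ∧ d ∣ ab.2} := by
    intro ab hab
    obtain ⟨hT, hnc⟩ := mem_filter.mp hab
    have ha : 1 ≤ ab.1 ∧ ab.1 ≤ m := mem_Icc.mp (mem_product.mp hT).1
    have hg : Nat.gcd ab.1 ab.2 ≤ m := (Nat.gcd_le_left _ (by omega)).trans ha.2
    have hg0 : Nat.gcd ab.1 ab.2 ≠ 0 := Nat.gcd_ne_zero_left (by omega)
    refine mem_biUnion.mpr ⟨Nat.gcd ab.1 ab.2, mem_Icc.mpr ⟨?_, hg⟩, ?_⟩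
    · unfold Nat.Coprime at hnc; omega
    · exact mem_filter.mpr ⟨hT, Nat.gcd_dvd_left _ _, Nat.gcd_dvd_right _ _⟩
  have hnc : (#{ab ∈ T | ¬ Nat.Coprime ab.1 ab.2} : ℝ) ≤ 11 / 12 * (m : ℝ) ^ 2 :=
    calc (#{ab ∈ T | ¬ Nat.Coprime ab.1 ab.2} : ℝ)
        ≤ ∑ d ∈ Icc 2 m, ((m / d : ℕ) : ℝ) ^ 2 := by
          exact_mod_cast (card_le_card hcover).trans <| card_biUnion_le.trans_eq <|
            sum_congr rfl fun d _ => card_Icc_prod_filter_dvd m d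
      _ ≤ ∑ d ∈ Icc 2 m, (m : ℝ) ^ 2 * ((d : ℝ) ^ 2)⁻¹ := by
          gcongr with d
          rw [← div_eq_mul_inv, ← div_pow]
          gcongr
          exact Nat.cast_div_le
      _ ≤ 11 / 12 * (m : ℝ) ^ 2 := by
          rw [← mul_sum, mul_comm]; gcongr; exact sum_Icc_two_inv_sq_le m
  have hsplit : (#(coprimePairs m) : ℝ) + #{ab ∈ T | ¬ Nat.Coprime ab.1 ab.2} = (m : ℝ) ^ 2 := by
    exact_mod_cast (card_filter_add_card_filter_not _).trans (by simp [sq])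
  linarith

lemma mem_grid {n : ℕ} {p : ℤ × ℤ} : p ∈ grid n ↔ 0 ≤ p.1 ∧ p.1 < n ∧ 0 ≤ p.2 ∧ p.2 < n := by
  simp only [grid, mem_product, mem_Icc]
  omega

lemma collinearSet_of_forall_mem_line {s : Finset (ℤ × ℤ)} (P w : ℤ × ℤ)
    (h : ∀ q ∈ s, ∃ t : ℤ, q = P + t • w) : CollinearSet s := by
  intro p hp q hq r hr
  obtain ⟨t₁, rfl⟩ := h p hp
  obtain ⟨t₂, rfl⟩ := h q hq
  obtain ⟨t₃, rfl⟩ := h r hr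
  simp only [Prod.fst_add, Prod.snd_add, Prod.smul_fst, Prod.smul_snd, smul_eq_mul]
  ring

lemma eq_of_sorted_triple_eq {α β : Type*} [DecidableEq α] [LinearOrder β] (f : α → β)
    {a b c a' b' c' : α} (hab : f a < f b) (hbc : f b < f c) (hab' : f a' < f b')
    (hbc' : f b' < f c') (h : ({a, b, c} : Finset α) = {a', b', c'}) :
    a = a' ∧ b = b' ∧ c = c' := by
  have mem : ∀ x, x = a ∨ x = b ∨ x = c ↔ x = a' ∨ x = b' ∨ x = c' := by
    intro x; simpa using congrArg (x ∈ ·) h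
  have ha := (mem a).1 (by simp)
  have hb := (mem b).1 (by simp)
  have hc := (mem c).1 (by simp)
  have ha' := (mem a').2 (by simp)
  have hb' := (mem b').2 (by simp)
  have hc' := (mem c').2 (by simp)
  clear mem h
  grind

def apTriple (P w : ℤ × ℤ) (k d : ℤ) : Finset (ℤ × ℤ) := {P, P + k • w, P + d • w}

section apTriple

variable {P w : ℤ × ℤ} {k d : ℤ}

lemma collinearSet_apTriple (P w : ℤ × ℤ) (k d : ℤ) : CollinearSet (apTriple P w k d) :=
  collinearSet_of_forall_mem_line P w fun q hq => by
    simp only [apTriple, mem_insert, mem_singleton] at hq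
    rcases hq with rfl | rfl | rfl
    exacts [⟨0, by simp⟩, ⟨k, rfl⟩, ⟨d, rfl⟩]

lemma apTriple_fst_lt (hw : 0 < w.1) (hk : 0 < k) (hkd : k < d) :
    P.1 < (P + k • w).1 ∧ (P + k • w).1 < (P + d • w).1 := by
  simp only [Prod.fst_add, Prod.smul_fst, smul_eq_mul]
  constructor <;> nlinarith

lemma card_apTriple (hw : 0 < w.1) (hk : 0 < k) (hkd : k < d) : #(apTriple P w k d) = 3 := by
  obtain ⟨h₁, h₂⟩ := apTriple_fst_lt (P := P) hw hk hkd
  exact card_eq_three.mpr ⟨_, _, _, fun h => h₁.ne (congrArg Prod.fst h),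
    fun h => (h₁.trans h₂).ne (congrArg Prod.fst h), fun h => h₂.ne (congrArg Prod.fst h), rfl⟩

lemma apTriple_subset_grid {n : ℕ} (hP : P ∈ grid n) (hPd : P + d • w ∈ grid n)
    (hw₁ : 0 ≤ w.1) (hw₂ : 0 ≤ w.2) (hk : 0 ≤ k) (hkd : k ≤ d) : apTriple P w k d ⊆ grid n := by
  have hmem : ∀ t : ℤ, 0 ≤ t → t ≤ d → P + t • w ∈ grid n := by
    intro t ht htd
    simp only [mem_grid, Prod.fst_add, Prod.snd_add, Prod.smul_fst, Prod.smul_snd,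
      smul_eq_mul] at hP hPd ⊢
    refine ⟨?_, ?_, ?_, ?_⟩ <;> nlinarith
  intro q hq
  simp only [apTriple, mem_insert, mem_singleton] at hq
  rcases hq with rfl | rfl | rfl
  exacts [hP, hmem k hk hkd, hPd]

lemma eq_of_apTriple_eq {P' w' : ℤ × ℤ} {k' d' : ℤ} (hw : 0 < w.1) (hk : 0 < k) (hkd : k < d)
    (hw' : 0 < w'.1) (hk' : 0 < k') (hkd' : k' < d')
    (h : apTriple P w k d = apTriple P' w' k' d') :
    P = P' ∧ k • w = k' • w' ∧ d • w = d' • w' := by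
  obtain ⟨h₁, h₂⟩ := apTriple_fst_lt (P := P) hw hk hkd
  obtain ⟨h₁', h₂'⟩ := apTriple_fst_lt (P := P') hw' hk' hkd'
  obtain ⟨rfl, hk, hd⟩ := eq_of_sorted_triple_eq Prod.fst h₁ h₂ h₁' h₂' h
  exact ⟨rfl, add_left_cancel hk, add_left_cancel hd⟩

end apTriple

lemma Nat.eq_of_mul_eq_mul_of_coprime {d d' a b a' b' : ℕ} (h : Nat.Coprime a b)
    (h' : Nat.Coprime a' b') (ha : d * a = d' * a') (hb : d * b = d' * b') : d = d' := by
  rw [← mul_one d, ← h, ← Nat.gcd_mul_left, ha, hb, Nat.gcd_mul_left, h', mul_one]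

-- The empty `d = 1` slice makes the count a sum over all of `Icc 1 N`.
def params (N : ℕ) : Finset (Σ _ : ℕ, ℕ × (ℕ × ℕ) × (ℕ × ℕ)) :=
  (Icc 1 N).sigma fun d => Ico 1 d ×ˢ coprimePairs (N / d) ×ˢ (range N ×ˢ range N)

def paramTriple : (Σ _ : ℕ, ℕ × (ℕ × ℕ) × (ℕ × ℕ)) → Finset (ℤ × ℤ)
  | ⟨d, k, (a, b), (x, y)⟩ => apTriple (x, y) (a, b) k d

lemma mem_params {N d k a b x y : ℕ} :
    ⟨d, k, (a, b), (x, y)⟩ ∈ params N ↔ (1 ≤ d ∧ d ≤ N) ∧ (1 ≤ k ∧ k < d) ∧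
      ((1 ≤ a ∧ a ≤ N / d) ∧ (1 ≤ b ∧ b ≤ N / d)) ∧ Nat.Coprime a b ∧ x < N ∧ y < N := by
  simp only [params, coprimePairs, mem_sigma, mem_Icc, mem_product, mem_Ico, mem_filter,
    mem_range]
  tauto

lemma paramTriple_mem {N n : ℕ} (hN : 2 * N ≤ n) {t : Σ _ : ℕ, ℕ × (ℕ × ℕ) × (ℕ × ℕ)}
    (ht : t ∈ params N) : paramTriple t ∈ {s ∈ (grid n).powersetCard 3 | CollinearSet s} := by
  obtain ⟨d, k, ⟨a, b⟩, x, y⟩ := t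
  obtain ⟨⟨hd, -⟩, ⟨hk, hkd⟩, ⟨⟨ha, haN⟩, hb, hbN⟩, -, hx, hy⟩ := mem_params.mp ht
  have hda : a * d ≤ N := (Nat.le_div_iff_mul_le hd).mp haN
  have hdb : b * d ≤ N := (Nat.le_div_iff_mul_le hd).mp hbN
  have hw : (0 : ℤ) < a := by exact_mod_cast ha
  have hk₀ : (0 : ℤ) < k := by exact_mod_cast hk
  have hkd' : (k : ℤ) < d := by exact_mod_cast hkd
  refine mem_filter.mpr ⟨mem_powersetCard.mpr ⟨?_, card_apTriple hw hk₀ hkd'⟩,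
    collinearSet_apTriple _ _ _ _⟩
  refine apTriple_subset_grid ?_ ?_ hw.le (by positivity) hk₀.le hkd'.le
  · simp only [mem_grid]; omega
  · simp only [mem_grid, Prod.fst_add, Prod.snd_add, Prod.smul_mk, smul_eq_mul]
    refine ⟨by positivity, ?_, by positivity, ?_⟩ <;> norm_cast <;> nlinarith

lemma injOn_paramTriple (N : ℕ) : Set.InjOn paramTriple (params N) := by
  rintro ⟨d, k, ⟨a, b⟩, x, y⟩ ht ⟨d', k', ⟨a', b'⟩, x', y'⟩ ht' h
  obtain ⟨-, ⟨hk, hkd⟩, ⟨⟨ha, -⟩, -⟩, hab, -⟩ := mem_params.mp ht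
  obtain ⟨-, ⟨hk', hkd'⟩, ⟨⟨ha', -⟩, -⟩, hab', -⟩ := mem_params.mp ht'
  obtain ⟨hP, hkw, hdw⟩ := eq_of_apTriple_eq (P := ((x : ℤ), (y : ℤ))) (w := ((a : ℤ), (b : ℤ)))
    (by simp; omega) (by simp; omega) (by simp; omega) (by simp; omega) (by simp; omega)
    (by simp; omega) h
  simp only [Prod.smul_mk, smul_eq_mul, Prod.mk.injEq] at hP hkw hdw
  norm_cast at hP hkw hdw
  obtain ⟨rfl, rfl⟩ := hP
  obtain rfl : d = d' := Nat.eq_of_mul_eq_mul_of_coprime hab hab' hdw.1 hdw.2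
  obtain rfl : a = a' := Nat.eq_of_mul_eq_mul_left (by omega) hdw.1
  obtain rfl : b = b' := Nat.eq_of_mul_eq_mul_left (by omega) hdw.2
  obtain rfl : k = k' := Nat.eq_of_mul_eq_mul_right ha hkw.1
  rfl

lemma card_params_le_collinearTriples (n : ℕ) : #(params (n / 2)) ≤ collinearTriples n :=
  card_le_card_of_injOn paramTriple (fun _ ht => paramTriple_mem (Nat.mul_div_le n 2) ht)
    (injOn_paramTriple _)

lemma div_two_mul_le_natCast_div {N d : ℕ} (hd : 0 < d) (hdN : d ≤ N) :
    (N : ℝ) / (2 * d) ≤ (N / d : ℕ) := by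
  have hq : 1 ≤ N / d := (Nat.one_le_div_iff hd).mpr hdN
  have hlt : N < N / d * d + d := Nat.lt_div_mul_add hd
  have hN : (N : ℝ) ≤ 2 * d * (N / d : ℕ) := by exact_mod_cast (by nlinarith : N ≤ 2 * d * (N / d))
  rw [div_le_iff₀ (by positivity)]
  linarith

lemma card_params (N : ℕ) :
    #(params N) = ∑ d ∈ Icc 1 N, (d - 1) * (#(coprimePairs (N / d)) * (N * N)) := by
  simp [params, card_sigma]

lemma card_params_ge (N : ℕ) : (N : ℝ) ^ 4 / 48 * (Real.log (N + 1) - 2) ≤ #(params N) := by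
  have hterm : ∀ d ∈ Icc 1 N, (N : ℝ) ^ 4 / 48 * ((d : ℝ)⁻¹ - ((d : ℝ) ^ 2)⁻¹) ≤
      (d - 1 : ℕ) * (#(coprimePairs (N / d)) * (N * N) : ℝ) := by
    intro d hd
    obtain ⟨hd, hdN⟩ := mem_Icc.mp hd
    have hd' : (1 : ℝ) ≤ d := by exact_mod_cast hd
    have hpairs : (N : ℝ) ^ 2 / (48 * d ^ 2) ≤ #(coprimePairs (N / d)) :=
      calc (N : ℝ) ^ 2 / (48 * d ^ 2) = ((N : ℝ) / (2 * d)) ^ 2 / 12 := by field_simp; ring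
        _ ≤ ((N / d : ℕ) : ℝ) ^ 2 / 12 := by gcongr; exact div_two_mul_le_natCast_div hd hdN
        _ ≤ #(coprimePairs (N / d)) := card_coprimePairs_ge _
    calc (N : ℝ) ^ 4 / 48 * ((d : ℝ)⁻¹ - ((d : ℝ) ^ 2)⁻¹)
        = (d - 1) * ((N : ℝ) ^ 2 / (48 * d ^ 2) * (N * N)) := by field_simp
      _ ≤ (d - 1 : ℕ) * (#(coprimePairs (N / d)) * (N * N) : ℝ) := by
          rw [Nat.cast_sub hd, Nat.cast_one]
          gcongr
  have hharmonic : Real.log (N + 1) ≤ ∑ d ∈ Icc 1 N, (d : ℝ)⁻¹ := by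
    simpa [harmonic_eq_sum_Icc] using log_add_one_le_harmonic N
  have hsq : ∑ d ∈ Icc 1 N, ((d : ℝ) ^ 2)⁻¹ ≤ 2 := by
    have : Icc 1 N = Ioo 0 (N + 1) := by ext; simp; omega
    simpa [this] using sum_Ioo_inv_sq_le (α := ℝ) 0 (N + 1)
  calc (N : ℝ) ^ 4 / 48 * (Real.log (N + 1) - 2)
      ≤ (N : ℝ) ^ 4 / 48 * ∑ d ∈ Icc 1 N, ((d : ℝ)⁻¹ - ((d : ℝ) ^ 2)⁻¹) := by
        rw [sum_sub_distrib]; gcongr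
    _ ≤ ∑ d ∈ Icc 1 N, (d - 1 : ℕ) * (#(coprimePairs (N / d)) * (N * N) : ℝ) := by
        rw [mul_sum]; exact sum_le_sum hterm
    _ = #(params N) := by rw [card_params]; push_cast; rfl

theorem collinearTriples_lower :
    ∃ c : ℝ, 0 < c ∧ ∀ᶠ n : ℕ in atTop,
      c * (n : ℝ) ^ 4 * Real.log n ≤ (collinearTriples n : ℝ) := by
  refine ⟨1 / 24576, by norm_num, ?_⟩
  have hlog_large : ∀ᶠ n : ℕ in atTop, 2 * (2 + Real.log 2) ≤ Real.log n :=
    (Real.tendsto_log_atTop.comp tendsto_natCast_atTop_atTop).eventually_ge_atTop _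
  filter_upwards [eventually_ge_atTop 2, hlog_large] with n hn hlog
  set N := n / 2
  have hNn : (n : ℝ) / 4 ≤ N := by
    rw [div_le_iff₀ (by norm_num)]; exact_mod_cast (by omega : n ≤ N * 4)
  have hlogN : Real.log n / 2 ≤ Real.log (N + 1) - 2 := by
    have hN : (n : ℝ) / 2 ≤ N + 1 := by
      rw [div_le_iff₀ (by norm_num)]; exact_mod_cast (by omega : n ≤ (N + 1) * 2)
    have := Real.log_le_log (by positivity) hN
    rw [Real.log_div (by positivity) (by norm_num)] at this
    linarith
  calc 1 / 24576 * (n : ℝ) ^ 4 * Real.log n = ((n : ℝ) / 4) ^ 4 / 48 * (Real.log n / 2) := by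
        ring
    _ ≤ (N : ℝ) ^ 4 / 48 * (Real.log (N + 1) - 2) := by
        gcongr
    _ ≤ #(params N) := card_params_ge N
    _ ≤ collinearTriples n := by exact_mod_cast card_params_le_collinearTriples n
end

section
/- If f_n denotes the maximum size of a subset of {1,...,n}² with no three collinear points, then f_n ≥ n for all n ≥ 1 (e.g. witnessed by points on a suitable curve or by monotonicity from smaller constructions: concretely, the set {(x, x² mod p) : 0 ≤ x < p} for a prime p ≤ n has no three collinear points when embedded in the grid). -/
/-!
Take a prime `p` with `p ≤ n < 2p` (Bertrand). In the box `[1, p] × [1, n]` keep the points with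
`y ≡ x² + k (mod p)`. Three such points in distinct columns are not collinear, because modulo `p`
their determinant is the Vandermonde product `(x₂ - x₁)(x₃ - x₁)(x₃ - x₂)`. A column holds at most
two of them, since `n < 2p`, and a pair in one column is not collinear with a point outside it.
As `k` runs over `ZMod p` these sets partition the `p * n` points of the box, so one of them has
at least `n` points.
-/

open Finset

/-- Twice the signed area of the triangle `abc`; it vanishes iff `a`, `b`, `c` are collinear. -/
def collinearityDet (a b c : ℤ × ℤ) : ℤ :=
  (b.1 - a.1) * (c.2 - a.2) - (b.2 - a.2) * (c.1 - a.1)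

def NoThreeCollinear (T : Finset (ℤ × ℤ)) : Prop :=
  ∀ a ∈ T, ∀ b ∈ T, ∀ c ∈ T, a ≠ b → a ≠ c → b ≠ c → collinearityDet a b c ≠ 0

lemma collinearityDet_swap (a b c : ℤ × ℤ) : collinearityDet a c b = -collinearityDet a b c := by
  unfold collinearityDet; ring

lemma collinearityDet_rotate (a b c : ℤ × ℤ) : collinearityDet b c a = collinearityDet a b c := by
  unfold collinearityDet; ring

lemma collinearityDet_ne_zero_of_fst_eq {a b c : ℤ × ℤ} (hab : a.1 = b.1) (hne : a ≠ b)
    (hc : c.1 ≠ a.1) : collinearityDet a b c ≠ 0 := by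
  have hy : b.2 - a.2 ≠ 0 := sub_ne_zero.2 fun h => hne (Prod.ext hab h.symm)
  have hdet : collinearityDet a b c = -((b.2 - a.2) * (c.1 - a.1)) := by
    unfold collinearityDet; rw [hab]; ring
  rw [hdet]
  exact neg_ne_zero.2 (mul_ne_zero hy (sub_ne_zero.2 hc))

lemma noThreeCollinear_of_columns {T : Finset (ℤ × ℤ)}
    (hcol : ∀ a ∈ T, ∀ b ∈ T, ∀ c ∈ T, a ≠ b → a ≠ c → b ≠ c → a.1 = b.1 → a.1 ≠ c.1)
    (hdist : ∀ a ∈ T, ∀ b ∈ T, ∀ c ∈ T,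
      a.1 ≠ b.1 → a.1 ≠ c.1 → b.1 ≠ c.1 → collinearityDet a b c ≠ 0) :
    NoThreeCollinear T := by
  intro a ha b hb c hc hab hac hbc
  by_cases hab1 : a.1 = b.1
  · exact collinearityDet_ne_zero_of_fst_eq hab1 hab
      fun h => hcol a ha b hb c hc hab hac hbc hab1 h.symm
  by_cases hac1 : a.1 = c.1
  · rw [← neg_neg (collinearityDet a b c), ← collinearityDet_swap, neg_ne_zero]
    exact collinearityDet_ne_zero_of_fst_eq hac1 hac
      fun h => hcol a ha c hc b hb hac hab hbc.symm hac1 h.symm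
  by_cases hbc1 : b.1 = c.1
  · rw [← collinearityDet_rotate]
    exact collinearityDet_ne_zero_of_fst_eq hbc1 hbc
      fun h => hcol b hb c hc a ha hbc hab.symm hac.symm hbc1 h.symm
  exact hdist a ha b hb c hc hab1 hac1 hbc1

lemma collinearityDet_ne_zero_of_sub_sq_eq {p : ℕ} [Fact p.Prime] {k : ZMod p} {a b c : ℤ × ℤ}
    (ha : (a.2 : ZMod p) - (a.1 : ZMod p) ^ 2 = k) (hb : (b.2 : ZMod p) - (b.1 : ZMod p) ^ 2 = k)
    (hc : (c.2 : ZMod p) - (c.1 : ZMod p) ^ 2 = k) (hab : (a.1 : ZMod p) ≠ b.1)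
    (hac : (a.1 : ZMod p) ≠ c.1) (hbc : (b.1 : ZMod p) ≠ c.1) :
    collinearityDet a b c ≠ 0 := by
  have hvandermonde : ((collinearityDet a b c : ℤ) : ZMod p) =
      (b.1 - a.1) * (c.1 - a.1) * (c.1 - b.1) := by
    rw [sub_eq_iff_eq_add'] at ha hb hc
    simp only [collinearityDet, Int.cast_sub, Int.cast_mul, ha, hb, hc]
    ring
  intro h
  rw [h, Int.cast_zero, eq_comm] at hvandermonde
  simp only [mul_eq_zero, sub_eq_zero] at hvandermonde
  rcases hvandermonde with (h | h) | h
  exacts [hab h.symm, hac h.symm, hbc h.symm]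

lemma le_abs_sub_of_intCast_eq {p : ℕ} {x y : ℤ} (h : (x : ZMod p) = y) (hne : x ≠ y) :
    (p : ℤ) ≤ |x - y| := by
  rw [ZMod.intCast_eq_intCast_iff_dvd_sub] at h
  exact Int.le_of_dvd (abs_pos.2 (sub_ne_zero.2 hne)) ((dvd_abs _ _).2 (by simpa using h.neg_right))

theorem noThreeCollinear_of_sub_sq_eq (p : ℕ) [Fact p.Prime] (k : ZMod p) (T : Finset (ℤ × ℤ))
    (hT : ∀ t ∈ T, t.1 ∈ Icc 1 (p : ℤ) ∧ t.2 ∈ Icc 1 (2 * p : ℤ) ∧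
      (t.2 : ZMod p) - (t.1 : ZMod p) ^ 2 = k) :
    NoThreeCollinear T := by
  have hx : ∀ s ∈ T, ∀ t ∈ T, (s.1 : ZMod p) = t.1 → s.1 = t.1 := by
    intro s hs t ht h
    by_contra hne
    have := le_abs_sub_of_intCast_eq h hne
    rw [le_abs'] at this
    have := (hT s hs).1; have := (hT t ht).1
    simp only [mem_Icc] at *
    omega
  have hy : ∀ s ∈ T, ∀ t ∈ T, s.1 = t.1 → s ≠ t → (p : ℤ) ≤ |s.2 - t.2| := by
    intro s hs t ht h hne
    refine le_abs_sub_of_intCast_eq ?_ fun h' => hne (Prod.ext h h')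
    have hs := (hT s hs).2.2
    rw [h, ← (hT t ht).2.2] at hs
    exact sub_left_injective hs
  refine noThreeCollinear_of_columns ?_ fun a ha b hb c hc hab hac hbc =>
    collinearityDet_ne_zero_of_sub_sq_eq (hT a ha).2.2 (hT b hb).2.2 (hT c hc).2.2
      (mt (hx a ha b hb) hab) (mt (hx a ha c hc) hac) (mt (hx b hb c hc) hbc)
  intro a ha b hb c hc hab hac hbc hab1 hac1
  have h₁ := hy a ha b hb hab1 hab
  have h₂ := hy a ha c hc hac1 hac
  have h₃ := hy b hb c hc (hab1 ▸ hac1) hbc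
  rw [le_abs'] at h₁ h₂ h₃
  have := (hT a ha).2.1; have := (hT b hb).2.1; have := (hT c hc).2.1
  simp only [mem_Icc] at *
  omega

noncomputable def parabolaPoints (p n : ℕ) (k : ZMod p) : Finset (ℤ × ℤ) :=
  {t ∈ Icc 1 (p : ℤ) ×ˢ Icc 1 (n : ℤ) | (t.2 : ZMod p) - (t.1 : ZMod p) ^ 2 = k}

lemma exists_le_card_parabolaPoints (p n : ℕ) [NeZero p] :
    ∃ k : ZMod p, n ≤ (parabolaPoints p n k).card := by
  have hbox : (univ : Finset (ZMod p)).card * n ≤ (Icc 1 (p : ℤ) ×ˢ Icc 1 (n : ℤ)).card := by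
    simp [card_product]
  obtain ⟨k, -, hk⟩ := exists_le_card_fiber_of_mul_le_card_of_maps_to
    (fun _ _ => mem_univ _) univ_nonempty hbox
  exact ⟨k, hk⟩

lemma exists_prime_le_lt_two_mul {n : ℕ} (hn : 2 ≤ n) : ∃ p, p.Prime ∧ p ≤ n ∧ n < 2 * p := by
  obtain ⟨p, hp, hlt, hle⟩ := Nat.exists_prime_lt_and_le_two_mul (n / 2) (by omega)
  exact ⟨p, hp, by omega, by omega⟩

/-- `f n ≥ n`: there is a subset of the `{1,…,n}²` grid of size at least `n`
with no three collinear points. -/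
theorem no_three_in_line_lower_bound (n : ℕ) (hn : 1 ≤ n) :
    ∃ T : Finset (ℤ × ℤ),
      (∀ p ∈ T, 1 ≤ p.1 ∧ p.1 ≤ (n : ℤ) ∧ 1 ≤ p.2 ∧ p.2 ≤ (n : ℤ)) ∧
      (∀ p ∈ T, ∀ q ∈ T, ∀ r ∈ T, p ≠ q → p ≠ r → q ≠ r →
        (q.1 - p.1) * (r.2 - p.2) - (q.2 - p.2) * (r.1 - p.1) ≠ 0) ∧
      n ≤ T.card := by
  obtain rfl | hn2 : n = 1 ∨ 2 ≤ n := by omega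
  · refine ⟨{(1, 1)}, by simp, ?_, by simp⟩
    simp only [mem_singleton]
    rintro _ rfl _ rfl _ rfl h
    exact absurd rfl h
  obtain ⟨p, hp, hpn, hnp⟩ := exists_prime_le_lt_two_mul hn2
  have := Fact.mk hp
  obtain ⟨k, hk⟩ := exists_le_card_parabolaPoints p n
  have hmem : ∀ t ∈ parabolaPoints p n k, t.1 ∈ Icc 1 (p : ℤ) ∧ t.2 ∈ Icc 1 (n : ℤ) ∧
      (t.2 : ZMod p) - (t.1 : ZMod p) ^ 2 = k := by
    simp [parabolaPoints, and_assoc]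
  refine ⟨parabolaPoints p n k, fun t ht => ?_, ?_, hk⟩
  · have := hmem t ht
    simp only [mem_Icc] at this
    omega
  · refine noThreeCollinear_of_sub_sq_eq p k _ fun t ht => ?_
    obtain ⟨hx, hy, hk⟩ := hmem t ht
    simp only [mem_Icc] at hx hy ⊢
    exact ⟨hx, by omega, hk⟩
end
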